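/- arXiv:2007.06564 — 2 statements merged into one kernel-verified Lean document; each statement's English description precedes it below -/
import Mathlib

section
/- All coherent states have the same value of G_XP as the fiducial vector: for every unit vector f : ZMod d → ℂ (with ∑ r, |f r|² = 1), every α, β ∈ ZMod d, and the rank-one projections (ρ_f) r s = f r · conj(f s) and ρ_{α,β} = D(α,β) ρ_f D(α,β)ᴴ, one has G_XP(ρ_{α,β}) = G_XP(ρ_f). -/
open Matrix
open scoped ComplexOrder

noncomputable section

/-- The Lorenz values of `p : Fin d → ℝ`, computed with the sorting permutation `Tuple.sort p`
(they are independent of the choice of sorting permutation):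
`L(p, ℓ) = ∑_{k=0}^{ℓ} p (π k)` where `π` arranges the values of `p` in ascending order. -/
def lorenzF {d : ℕ} (p : Fin d → ℝ) (ℓ : Fin d) : ℝ :=
  ∑ k ∈ Finset.Iic ℓ, p (Tuple.sort p k)

/-- The Gini index of `p : Fin d → ℝ`: `G(p) = 1 − (2/(d+1)) · ∑_{ℓ=0}^{d−1} L(p, ℓ)`. -/
def giniF {d : ℕ} (p : Fin d → ℝ) : ℝ :=
  1 - (2 / ((d : ℝ) + 1)) * ∑ ℓ : Fin d, lorenzF p ℓ

/-- The Gini index of a function `p : ZMod d → ℝ`, obtained by reindexing along the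
bijection `Fin d → ZMod d`, `k ↦ (k : ZMod d)`. -/
def gini {d : ℕ} [NeZero d] (p : ZMod d → ℝ) : ℝ :=
  giniF (fun k : Fin d => p ((k : ℕ) : ZMod d))

/-- A density matrix: positive semidefinite with trace 1. -/
def IsDensityMatrix {d : ℕ} [NeZero d] (ρ : Matrix (ZMod d) (ZMod d) ℂ) : Prop :=
  ρ.PosSemidef ∧ ρ.trace = 1

/-- The position distribution of `ρ`: `P_X(ρ) r = Re(ρ r r)`. -/
def PX {d : ℕ} [NeZero d] (ρ : Matrix (ZMod d) (ZMod d) ℂ) : ZMod d → ℝ :=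
  fun r => (ρ r r).re

/-- `ω = exp(2πi/d)`. -/
def omega (d : ℕ) : ℂ := Complex.exp (2 * Real.pi * Complex.I / d)

/-- The Fourier matrix `F r s = ω^{(r·s).val} / √d`. -/
def Fmat (d : ℕ) [NeZero d] : Matrix (ZMod d) (ZMod d) ℂ :=
  Matrix.of fun r s : ZMod d => omega d ^ (r * s).val / (Real.sqrt d : ℂ)

/-- The momentum distribution of `ρ`: `P_P(ρ) r = Re((Fᴴ ρ F) r r)`. -/
def PP {d : ℕ} [NeZero d] (ρ : Matrix (ZMod d) (ZMod d) ℂ) : ZMod d → ℝ :=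
  fun r => (((Fmat d)ᴴ * ρ * Fmat d) r r).re

/-- `G_X(ρ) = G(P_X(ρ))`. -/
def GX {d : ℕ} [NeZero d] (ρ : Matrix (ZMod d) (ZMod d) ℂ) : ℝ := gini (PX ρ)

/-- `G_P(ρ) = G(P_P(ρ))`. -/
def GP {d : ℕ} [NeZero d] (ρ : Matrix (ZMod d) (ZMod d) ℂ) : ℝ := gini (PP ρ)

/-- `G_XP(ρ) = G_X(ρ) + G_P(ρ)`. -/
def GXP {d : ℕ} [NeZero d] (ρ : Matrix (ZMod d) (ZMod d) ℂ) : ℝ := GX ρ + GP ρ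


/-- `Z(α) m n = ω^{(α·m).val}` if `m = n`, else `0`. -/
def Zmat (d : ℕ) [NeZero d] (α : ZMod d) : Matrix (ZMod d) (ZMod d) ℂ :=
  Matrix.of fun m n : ZMod d => if m = n then omega d ^ (α * m).val else 0

/-- `X(β) m n = 1` if `m = n + β`, else `0`. -/
def Xmat (d : ℕ) [NeZero d] (β : ZMod d) : Matrix (ZMod d) (ZMod d) ℂ :=
  Matrix.of fun m n : ZMod d => if m = n + β then 1 else 0

/-- The displacement operator `D(α,β) = ω^{((−2⁻¹)·α·β).val} · Z(α) · X(β)`,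
where `2⁻¹` is the inverse of `2` in `ZMod d`. -/
def Dmat (d : ℕ) [NeZero d] (α β : ZMod d) : Matrix (ZMod d) (ZMod d) ℂ :=
  omega d ^ ((-(2 : ZMod d)⁻¹ * α * β).val) • (Zmat d α * Xmat d β)

end

/-! Up to a unimodular phase, which cancels in `D ρ Dᴴ`, the displacement operator is `Z(α) X(β)`.
Conjugating by it translates the position distribution by `β`, and, because the Fourier
matrix turns the phases `Z(α)` into translations, the momentum distribution by `α`. The Gini
index only sees the sorted values of a distribution, so it is invariant under translations. -/

open Finset

section Gini

theorem giniF_comp_perm {n : ℕ} (p : Fin n → ℝ) (σ : Equiv.Perm (Fin n)) :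
    giniF (p ∘ σ) = giniF p := by
  have h := Tuple.comp_perm_comp_sort_eq_comp_sort (σ := σ) (f := p)
  simp only [giniF, lorenzF]
  congr 3 with ℓ
  exact sum_congr rfl fun k _ => congrFun h k

theorem ZMod.finEquiv_apply (d : ℕ) [NeZero d] (k : Fin d) :
    ZMod.finEquiv d k = ((k : ℕ) : ZMod d) := by
  obtain _ | n := d
  · exact absurd rfl (NeZero.ne 0)
  · exact (Fin.cast_val_eq_self k).symm

theorem gini_comp_perm {d : ℕ} [NeZero d] (p : ZMod d → ℝ) (σ : Equiv.Perm (ZMod d)) :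
    gini (p ∘ σ) = gini p := by
  let e : Fin d ≃ ZMod d := (ZMod.finEquiv d).toEquiv
  have he : ∀ k, e k = ((k : ℕ) : ZMod d) := ZMod.finEquiv_apply d
  have hgini : ∀ q : ZMod d → ℝ, gini q = giniF (q ∘ e) := fun q => by
    simp only [gini, Function.comp_def, he]
  rw [hgini, hgini, ← giniF_comp_perm (p ∘ e) (e.trans (σ.trans e.symm))]
  simp [Function.comp_def]

theorem gini_comp_sub {d : ℕ} [NeZero d] (p : ZMod d → ℝ) (β : ZMod d) :
    gini (fun r => p (r - β)) = gini p :=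
  gini_comp_perm p (Equiv.subRight β)

end Gini

section Displacement

variable {d : ℕ} [NeZero d]

local notation "ψ" => (ZMod.stdAddChar : AddChar (ZMod d) ℂ)

theorem omega_pow_val (x : ZMod d) : omega d ^ x.val = ψ x := by
  rw [ZMod.stdAddChar_apply, ZMod.toCircle_apply, omega, ← Complex.exp_nat_mul]
  ring_nf

theorem stdAddChar_mul_conj (x : ZMod d) : ψ x * starRingEnd ℂ (ψ x) = 1 := by
  rw [← AddChar.map_neg_eq_conj, ← AddChar.map_add_eq_mul, add_neg_cancel,
    AddChar.map_zero_eq_one]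

theorem smul_mul_mul_conjTranspose_smul {n R : Type*} [Fintype n] [CommSemiring R] [StarRing R]
    {c : R} (hc : c * star c = 1) (M ρ : Matrix n n R) :
    c • M * ρ * (c • M)ᴴ = M * ρ * Mᴴ := by
  rw [conjTranspose_smul, smul_mul, smul_mul, Matrix.mul_smul, smul_smul, hc, one_smul]

theorem Dmat_mul_mul_conjTranspose (α β : ZMod d) (ρ : Matrix (ZMod d) (ZMod d) ℂ) :
    Dmat d α β * ρ * (Dmat d α β)ᴴ = Zmat d α * Xmat d β * ρ * (Zmat d α * Xmat d β)ᴴ :=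
  smul_mul_mul_conjTranspose_smul (by rw [omega_pow_val]; exact stdAddChar_mul_conj _) _ _

theorem Zmat_mul_Xmat_apply (α β m n : ZMod d) :
    (Zmat d α * Xmat d β) m n = if n = m - β then ψ (α * m) else 0 := by
  rw [mul_apply, sum_eq_single m]
  · simp [Zmat, Xmat, omega_pow_val, eq_sub_iff_add_eq, eq_comm]
  · intro k _ hk
    simp [Zmat, Ne.symm hk]
  · simp

theorem Zmat_mul_Xmat_conj_apply (α β : ZMod d) (ρ : Matrix (ZMod d) (ZMod d) ℂ) (k l : ZMod d) :
    (Zmat d α * Xmat d β * ρ * (Zmat d α * Xmat d β)ᴴ) k l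
      = ψ (α * k) * ρ (k - β) (l - β) * starRingEnd ℂ (ψ (α * l)) := by
  simp only [mul_apply (M := Zmat d α * Xmat d β * ρ),
    mul_apply (M := Zmat d α * Xmat d β) (N := ρ), conjTranspose_apply, Zmat_mul_Xmat_apply]
  simp [apply_ite (starRingEnd ℂ)]

theorem PX_Zmat_mul_Xmat_conj (α β : ZMod d) (ρ : Matrix (ZMod d) (ZMod d) ℂ) :
    PX (Zmat d α * Xmat d β * ρ * (Zmat d α * Xmat d β)ᴴ) = fun r => PX ρ (r - β) := by
  ext r
  rw [PX, Zmat_mul_Xmat_conj_apply, mul_right_comm, stdAddChar_mul_conj, one_mul, PX]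

theorem conjTranspose_mul_mul_apply {n R : Type*} [Fintype n] [CommSemiring R] [StarRing R]
    (U ρ : Matrix n n R) (a b : n) :
    (Uᴴ * ρ * U) a b = ∑ r, ∑ s, star (U r a) * ρ r s * U s b := by
  simp only [mul_apply, conjTranspose_apply, sum_mul]
  exact sum_comm

theorem star_Fmat_mul_Fmat (k l b : ZMod d) :
    star (Fmat d k b) * Fmat d l b = ψ ((l - k) * b) / d := by
  have hsqrt : ((√d : ℝ) : ℂ) * (√d : ℝ) = d := by
    exact_mod_cast Real.mul_self_sqrt (Nat.cast_nonneg d)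
  rw [Fmat, of_apply, of_apply, omega_pow_val, omega_pow_val, star_div₀, Complex.star_def,
    Complex.conj_ofReal, ← AddChar.map_neg_eq_conj, div_mul_div_comm, ← AddChar.map_add_eq_mul,
    hsqrt, neg_add_eq_sub, ← sub_mul]

theorem PP_apply (ρ : Matrix (ZMod d) (ZMod d) ℂ) (a : ZMod d) :
    PP ρ a = ((∑ k, ∑ l, ψ ((l - k) * a) * ρ k l) / d).re := by
  simp only [PP, conjTranspose_mul_mul_apply, mul_right_comm _ (ρ _ _), star_Fmat_mul_Fmat,
    div_mul_eq_mul_div, sum_div]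

theorem PP_Zmat_mul_Xmat_conj (α β : ZMod d) (ρ : Matrix (ZMod d) (ZMod d) ℂ) :
    PP (Zmat d α * Xmat d β * ρ * (Zmat d α * Xmat d β)ᴴ) = fun a => PP ρ (a - α) := by
  ext a
  rw [PP_apply, PP_apply]
  congr 2
  refine Fintype.sum_equiv (Equiv.subRight β) _ _ fun k => ?_
  refine Fintype.sum_equiv (Equiv.subRight β) _ _ fun l => ?_
  simp only [Equiv.subRight_apply, Zmat_mul_Xmat_conj_apply, ← AddChar.map_neg_eq_conj]
  rw [show (l - β - (k - β)) * (a - α) = (l - k) * a + α * k + -(α * l) by ring,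
    AddChar.map_add_eq_mul, AddChar.map_add_eq_mul]
  ring

end Displacement

theorem GXP_coherent_state_general {d : ℕ} [NeZero d]
    (ρf : Matrix (ZMod d) (ZMod d) ℂ)
    (α β : ZMod d) :
    GXP (Dmat d α β * ρf * (Dmat d α β)ᴴ) = GXP ρf := by
  simp only [GXP, GX, GP, Dmat_mul_mul_conjTranspose, PX_Zmat_mul_Xmat_conj,
    PP_Zmat_mul_Xmat_conj, gini_comp_sub]

/-- All coherent states have the same value of `G_XP` as the fiducial vector:
for every unit vector `f : ZMod d → ℂ` (with `∑ r, |f r|² = 1`), every `α, β ∈ ZMod d`, and the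
rank-one projections `(ρ_f) r s = f r · conj(f s)` and `ρ_{α,β} = D(α,β) ρ_f D(α,β)ᴴ`, one has
`G_XP(ρ_{α,β}) = G_XP(ρ_f)`. -/
theorem GXP_coherent_state {d : ℕ} [NeZero d] (hd : 2 ≤ d) (hodd : Odd d)
    (f : ZMod d → ℂ) (hf : ∑ r, ‖f r‖ ^ 2 = 1)
    (ρf : Matrix (ZMod d) (ZMod d) ℂ)
    (hρf : ∀ r s : ZMod d, ρf r s = f r * (starRingEnd ℂ) (f s))
    (α β : ZMod d) :
    GXP (Dmat d α β * ρf * (Dmat d α β)ᴴ) = GXP ρf :=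
  GXP_coherent_state_general ρf α β
end

section
/- For every density matrix ρ it is impossible that both G_X(ρ) = (d − 1)/(d + 1) and G_P(ρ) = (d − 1)/(d + 1); consequently every density matrix satisfies G_XP(ρ) < 2(d − 1)/(d + 1). -/
open Matrix
open scoped ComplexOrder

/-! The Gini index of a probability vector `p` is maximal only if `p` is a point mass: the Lorenz
values satisfy `L(p, ℓ) ≥ p (π ℓ)` and `L(p, d - 1) = 1`, so `∑ ℓ, L(p, ℓ) ≥ 2 - max p`.
A density matrix whose position distribution is a point mass at `r` is the pure state `|r⟩⟨r|`,
and its momentum distribution is uniform, `|F r s|² = 1 / d`, which is not a point mass for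
`d ≥ 2`. -/

open Finset

section Lorenz

variable {d : ℕ} {p : Fin d → ℝ}

lemma apply_sort_le_lorenzF (hp : 0 ≤ p) (ℓ : Fin d) : p (Tuple.sort p ℓ) ≤ lorenzF p ℓ :=
  single_le_sum (f := fun k => p (Tuple.sort p k)) (fun _ _ => hp _) (mem_Iic.mpr le_rfl)

variable [NeZero d]

lemma lorenzF_top (p : Fin d → ℝ) : lorenzF p ⊤ = ∑ i, p i := by
  rw [lorenzF, Iic_top]
  exact Equiv.sum_comp (Tuple.sort p) p

lemma two_mul_sum_sub_le_sum_lorenzF (hp : 0 ≤ p) :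
    2 * ∑ i, p i - p (Tuple.sort p ⊤) ≤ ∑ ℓ, lorenzF p ℓ := by
  have hsorted : ∑ k ∈ univ.erase ⊤, p (Tuple.sort p k) = ∑ i, p i - p (Tuple.sort p ⊤) := by
    rw [← Equiv.sum_comp (Tuple.sort p) p, ← add_sum_erase _ _ (mem_univ ⊤)]
    ring
  calc 2 * ∑ i, p i - p (Tuple.sort p ⊤)
      = lorenzF p ⊤ + ∑ k ∈ univ.erase ⊤, p (Tuple.sort p k) := by
        rw [hsorted, lorenzF_top]; ring
    _ ≤ lorenzF p ⊤ + ∑ ℓ ∈ univ.erase ⊤, lorenzF p ℓ := by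
        gcongr with ℓ; exact apply_sort_le_lorenzF hp ℓ
    _ = ∑ ℓ, lorenzF p ℓ := add_sum_erase _ _ (mem_univ ⊤)

lemma giniF_le_sub (hp : 0 ≤ p) (hsum : ∑ i, p i = 1) :
    giniF p ≤ ((d : ℝ) - 1) / ((d : ℝ) + 1) - 2 / ((d : ℝ) + 1) * (1 - p (Tuple.sort p ⊤)) := by
  have hL := two_mul_sum_sub_le_sum_lorenzF hp
  rw [hsum] at hL
  have hmax : ((d : ℝ) - 1) / ((d : ℝ) + 1) = 1 - 2 / ((d : ℝ) + 1) := by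
    field_simp
    ring
  have := mul_le_mul_of_nonneg_left hL (by positivity : (0 : ℝ) ≤ 2 / ((d : ℝ) + 1))
  rw [giniF, hmax]
  linarith

end Lorenz

section Gini

variable {d : ℕ} [NeZero d] {p : ZMod d → ℝ}

lemma sum_fin_natCast_zmod {M : Type*} [AddCommMonoid M] (f : ZMod d → M) :
    ∑ k : Fin d, f (k : ℕ) = ∑ x, f x := by
  refine Fintype.sum_bijective _ ⟨fun k l hkl => Fin.ext ?_, fun x => ⟨⟨x.val, x.val_lt⟩, ?_⟩⟩ _ _
    fun _ => rfl
  · simpa [ZMod.val_cast_of_lt k.isLt, ZMod.val_cast_of_lt l.isLt] using congrArg ZMod.val hkl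
  · simp

lemma exists_gini_le_sub (hp : 0 ≤ p) (hsum : ∑ r, p r = 1) :
    ∃ r, gini p ≤ ((d : ℝ) - 1) / ((d : ℝ) + 1) - 2 / ((d : ℝ) + 1) * (1 - p r) :=
  ⟨_, giniF_le_sub (fun _ => hp _) ((sum_fin_natCast_zmod p).trans hsum)⟩

lemma gini_le_max (hp : 0 ≤ p) (hsum : ∑ r, p r = 1) :
    gini p ≤ ((d : ℝ) - 1) / ((d : ℝ) + 1) := by
  obtain ⟨r, hr⟩ := exists_gini_le_sub hp hsum
  have hpr : p r ≤ 1 := hsum ▸ single_le_sum (fun s _ => hp s) (mem_univ r)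
  have := mul_nonneg (by positivity : (0 : ℝ) ≤ 2 / ((d : ℝ) + 1)) (sub_nonneg.mpr hpr)
  linarith

lemma exists_one_le_of_gini_eq_max (hp : 0 ≤ p) (hsum : ∑ r, p r = 1)
    (hmax : gini p = ((d : ℝ) - 1) / ((d : ℝ) + 1)) : ∃ r, 1 ≤ p r := by
  obtain ⟨r, hr⟩ := exists_gini_le_sub hp hsum
  refine ⟨r, by_contra fun hlt => ?_⟩
  have := mul_pos (by positivity : (0 : ℝ) < 2 / ((d : ℝ) + 1)) (sub_pos.mpr (not_le.mp hlt))
  linarith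

end Gini

lemma Matrix.PosSemidef.apply_eq_zero_of_diag_eq_zero {n 𝕜 : Type*} [Fintype n] [RCLike 𝕜]
    {A : Matrix n n 𝕜} (hA : A.PosSemidef) {i : n} (hi : A i i = 0) (j : n) :
    A j i = 0 ∧ A i j = 0 := by
  classical
  have hcol : A *ᵥ Pi.single i 1 = 0 :=
    (hA.dotProduct_mulVec_zero_iff _).mp (by simpa [mulVec_single_one] using hi)
  have hji : A j i = 0 := by simpa [mulVec_single_one] using congrFun hcol j
  refine ⟨hji, ?_⟩
  rw [← hA.1.apply i j, hji, star_zero]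

section Fourier

variable {d : ℕ} [NeZero d]

lemma omega_pow_val_s14 (j : ZMod d) : omega d ^ j.val = ZMod.stdAddChar j := by
  rw [omega, ← Complex.exp_nat_mul, ZMod.stdAddChar_apply, ZMod.toCircle_apply]
  ring_nf

lemma Fmat_apply (r s : ZMod d) :
    Fmat d r s = ZMod.stdAddChar (r * s) / (Real.sqrt d : ℂ) := by
  rw [Fmat, of_apply, omega_pow_val_s14]

lemma star_stdAddChar (j : ZMod d) :
    star (ZMod.stdAddChar j) = ZMod.stdAddChar (-j) := by
  rw [ZMod.stdAddChar_apply, ZMod.stdAddChar_apply, AddChar.map_neg_eq_inv, Circle.coe_inv_eq_conj]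
  rfl

lemma Fmat_mul_conjTranspose : Fmat d * (Fmat d)ᴴ = 1 := by
  have hd : (d : ℂ) ≠ 0 := Nat.cast_ne_zero.mpr (NeZero.ne d)
  have hsqrt : (Real.sqrt d : ℂ) * (Real.sqrt d : ℂ) = d := by
    rw [← Complex.ofReal_mul, Real.mul_self_sqrt (Nat.cast_nonneg d), Complex.ofReal_natCast]
  ext a b
  have hterm (s : ZMod d) : Fmat d a s * (Fmat d)ᴴ s b = ZMod.stdAddChar (s * (a - b)) / d := by
    rw [conjTranspose_apply, Fmat_apply, Fmat_apply, star_div₀, star_stdAddChar, Complex.star_def,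
      Complex.conj_ofReal, div_mul_div_comm, hsqrt, ← AddChar.map_add_eq_mul]
    ring_nf
  rw [mul_apply, Finset.sum_congr rfl fun s _ => hterm s, ← Finset.sum_div,
    AddChar.sum_mulShift _ (ZMod.isPrimitive_stdAddChar d), ZMod.card, one_apply]
  by_cases hab : a = b <;> simp [hab, sub_eq_zero, hd]

lemma PP_single (r s : ZMod d) :
    PP (Matrix.single r r 1 : Matrix (ZMod d) (ZMod d) ℂ) s = 1 / d := by
  have hentry :
      ((Fmat d)ᴴ * Matrix.single r r (1 : ℂ) * Fmat d) s s = Complex.normSq (Fmat d r s) := by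
    simp [mul_apply, single_apply, Complex.normSq_eq_conj_mul_self, ite_and]
  rw [PP, hentry, Complex.ofReal_re, Fmat_apply, Complex.normSq_div, Complex.normSq_ofReal,
    Real.mul_self_sqrt (Nat.cast_nonneg d), ZMod.stdAddChar_apply, Complex.normSq_eq_norm_sq,
    Circle.norm_coe, one_pow]

lemma PP_eq_PX (ρ : Matrix (ZMod d) (ZMod d) ℂ) : PP ρ = PX ((Fmat d)ᴴ * ρ * Fmat d) := rfl

lemma GP_eq_GX (ρ : Matrix (ZMod d) (ZMod d) ℂ) : GP ρ = GX ((Fmat d)ᴴ * ρ * Fmat d) := rfl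

end Fourier

namespace IsDensityMatrix

variable {d : ℕ} [NeZero d] {ρ : Matrix (ZMod d) (ZMod d) ℂ}

lemma PX_nonneg (hρ : IsDensityMatrix ρ) (r : ZMod d) : 0 ≤ PX ρ r :=
  (Complex.nonneg_iff.mp hρ.1.diag_nonneg).1

lemma sum_PX (hρ : IsDensityMatrix ρ) : ∑ r, PX ρ r = 1 := by
  simp only [PX, ← Complex.re_sum]
  exact congrArg Complex.re hρ.2

lemma conjTranspose_mul_mul_same (hρ : IsDensityMatrix ρ) {U : Matrix (ZMod d) (ZMod d) ℂ}
    (hU : U * Uᴴ = 1) : IsDensityMatrix (Uᴴ * ρ * U) :=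
  ⟨hρ.1.conjTranspose_mul_mul_same U, by
    rw [trace_mul_comm, ← Matrix.mul_assoc, hU, Matrix.one_mul, hρ.2]⟩

lemma eq_single_of_one_le_PX (hρ : IsDensityMatrix ρ) {r : ZMod d} (hr : 1 ≤ PX ρ r) :
    ρ = Matrix.single r r 1 := by
  have hPX : ∀ s ≠ r, PX ρ s = 0 := by
    have hrest : ∑ s ∈ univ.erase r, PX ρ s = 0 := by
      have := add_sum_erase univ (PX ρ) (mem_univ r)
      have := sum_nonneg fun s (_ : s ∈ univ.erase r) => hρ.PX_nonneg s
      linarith [hρ.sum_PX]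
    exact fun s hs => (sum_eq_zero_iff_of_nonneg fun s _ => hρ.PX_nonneg s).mp hrest s
      (mem_erase.mpr ⟨hs, mem_univ s⟩)
  have hdiag : ∀ s ≠ r, ρ s s = 0 := fun s hs =>
    Complex.ext (hPX s hs) (Complex.nonneg_iff.mp hρ.1.diag_nonneg).2.symm
  have hrr : ρ r r = 1 := by
    rw [← hρ.2, trace]
    exact (sum_eq_single r (fun s _ hs => hdiag s hs) (by simp)).symm
  ext a b
  rw [single_apply]
  by_cases ha : a = r
  · by_cases hb : b = r
    · simp [ha, hb, hrr]
    · simp [(hρ.1.apply_eq_zero_of_diag_eq_zero (hdiag b hb) a).1, Ne.symm hb]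
  · simp [(hρ.1.apply_eq_zero_of_diag_eq_zero (hdiag a ha) b).2, Ne.symm ha]

lemma GX_le_max (hρ : IsDensityMatrix ρ) : GX ρ ≤ ((d : ℝ) - 1) / ((d : ℝ) + 1) :=
  gini_le_max hρ.PX_nonneg hρ.sum_PX

end IsDensityMatrix

/-- For every density matrix `ρ` it is impossible that both
`G_X(ρ) = (d − 1)/(d + 1)` and `G_P(ρ) = (d − 1)/(d + 1)`; consequently every density matrix
satisfies `G_XP(ρ) < 2(d − 1)/(d + 1)`. -/
theorem not_GX_and_GP_max {d : ℕ} [NeZero d] (hd : 2 ≤ d)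
    (ρ : Matrix (ZMod d) (ZMod d) ℂ) (hρ : IsDensityMatrix ρ) :
    ¬(GX ρ = ((d : ℝ) - 1) / ((d : ℝ) + 1) ∧ GP ρ = ((d : ℝ) - 1) / ((d : ℝ) + 1)) ∧
    GXP ρ < 2 * (((d : ℝ) - 1) / ((d : ℝ) + 1)) := by
  have hρP := hρ.conjTranspose_mul_mul_same Fmat_mul_conjTranspose
  have hX := hρ.GX_le_max
  have hP := hρP.GX_le_max
  rw [← GP_eq_GX] at hP
  have hnot : ¬(GX ρ = ((d : ℝ) - 1) / ((d : ℝ) + 1) ∧ GP ρ = ((d : ℝ) - 1) / ((d : ℝ) + 1)) := by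
    rintro ⟨hXmax, hPmax⟩
    obtain ⟨r, hr⟩ := exists_one_le_of_gini_eq_max hρ.PX_nonneg hρ.sum_PX hXmax
    obtain ⟨s, hs⟩ := exists_one_le_of_gini_eq_max hρP.PX_nonneg hρP.sum_PX hPmax
    rw [← PP_eq_PX, hρ.eq_single_of_one_le_PX hr, PP_single,
      le_div_iff₀ (by positivity), one_mul] at hs
    have : (2 : ℝ) ≤ d := by exact_mod_cast hd
    linarith
  refine ⟨hnot, ?_⟩
  rw [GXP]
  by_cases hXmax : GX ρ = ((d : ℝ) - 1) / ((d : ℝ) + 1)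
  · have := lt_of_le_of_ne hP fun hPmax => hnot ⟨hXmax, hPmax⟩
    linarith
  · have := lt_of_le_of_ne hX hXmax
    linarith
end
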